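/- Let J be the SLOPE norm with weights w_1 ≥ ... ≥ w_n ≥ 0, w_1 > 0. The subdifferential of J at x equals the set of g ∈ ℝ^n such that ⟨g, x⟩ = J(x) and Σ_{k=1}^{q} |g|_{[k]} ≤ Σ_{k=1}^{q} w_k for every q ∈ {1,...,n}. -/

import Mathlib

open Finset Matrix

/-- `kth v k` is the `(k+1)`-th largest entry of `v` (zero-indexed: `kth v 0` is the largest). -/
noncomputable def kth {n : ℕ} (v : Fin n → ℝ) (k : ℕ) : ℝ :=
  if h : k < n then v (Tuple.sort (fun i => -v i) ⟨k, h⟩) else 0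

/-- `absKth v k` is the `(k+1)`-th largest absolute entry of `v` (zero-indexed). -/
noncomputable def absKth {n : ℕ} (v : Fin n → ℝ) (k : ℕ) : ℝ :=
  kth (fun i => |v i|) k

/-- The SLOPE (sorted-ℓ1) function with weights `w 0 ≥ w 1 ≥ …` (zero-indexed). -/
noncomputable def slopeNorm {n : ℕ} (w : ℕ → ℝ) (x : Fin n → ℝ) : ℝ :=
  ∑ k ∈ Finset.range n, w k * absKth x k

/-- Dual norm of a norm `J` on `ℝ^n`. -/
noncomputable def dualNorm {n : ℕ} (J : (Fin n → ℝ) → ℝ) (g : Fin n → ℝ) : ℝ :=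
  sSup {t : ℝ | ∃ x : Fin n → ℝ, J x ≤ 1 ∧ t = ∑ i, g i * x i}

/-- `dropIdx ℓ v` is the vector `v` deprived of its `ℓ`-th entry. -/
def dropIdx {n : ℕ} (ℓ : Fin n) (v : Fin n → ℝ) : Fin (n - 1) → ℝ :=
  fun j => if h : (j : ℕ) < (ℓ : ℕ) then v ⟨j, lt_trans h ℓ.isLt⟩
           else v ⟨(j : ℕ) + 1, by have := j.isLt; omega⟩

/-! If the partial sums of the sorted `|g|` are dominated by those of `w`, then for every `z`
the rearrangement inequality and Abel summation against the nonincreasing sequence `|z|_[k]` give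
`⟨g, z⟩ ≤ ∑ |g|_[k] |z|_[k] ≤ ∑ w_k |z|_[k] = J(z)`, hence `J^D(g) ≤ 1`. Conversely, testing
`J^D(g) ≤ 1` against the signs of `g` on its `q + 1` largest entries, scaled by
`(∑_{k ≤ q} w_k)⁻¹` so that the SLOPE norm is `1`, yields the `q`-th partial sum inequality.
Since `w_1 > 0` and the weights are nonnegative, `|z_i| ≤ J(z) / w_1`, so the set whose supremum
defines `J^D(g)` is bounded above and that supremum is not a junk value. -/

section Sorting

variable {n : ℕ}

theorem kth_coe (v : Fin n → ℝ) (k : Fin n) :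
    kth v k = v (Tuple.sort (fun i => -v i) k) := by
  simp [kth]

theorem kth_antitone (v : Fin n → ℝ) : Antitone fun k : Fin n => kth v k := by
  intro k l hkl
  have := Tuple.monotone_sort (fun i => -v i) hkl
  simp only [Function.comp_apply, neg_le_neg_iff] at this
  simpa only [kth_coe] using this

theorem kth_eq_of_antitone (v : Fin n → ℝ) (σ : Equiv.Perm (Fin n)) (hσ : Antitone (v ∘ σ))
    (k : Fin n) : kth v k = v (σ k) := by
  have hsort := Tuple.monotone_sort (fun i => -v i)
  have hsame := congrFun (Tuple.unique_monotone hsort fun _ _ h => neg_le_neg (hσ h)) k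
  simp only [Function.comp_apply, neg_inj] at hsame
  rw [kth_coe, hsame]

theorem kth_symm_sort (v : Fin n → ℝ) (i : Fin n) :
    kth v ((Tuple.sort fun j => -v j).symm i) = v i := by
  rw [kth_coe, Equiv.apply_symm_apply]

theorem le_kth_zero (v : Fin n → ℝ) (i : Fin n) : v i ≤ kth v 0 := by
  have h := kth_antitone v
    (show (⟨0, i.pos⟩ : Fin n) ≤ (Tuple.sort fun j => -v j).symm i from Nat.zero_le _)
  simpa only [kth_symm_sort] using h

/-- The rearrangement inequality. -/
theorem sum_mul_le_sum_kth_mul_kth (u v : Fin n → ℝ) :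
    ∑ i, u i * v i ≤ ∑ k ∈ range n, kth u k * kth v k := by
  set σ := Tuple.sort fun i => -u i
  set τ := Tuple.sort fun i => -v i
  have hmono : Monovary (fun k : Fin n => kth u k) (fun k : Fin n => kth v k) :=
    (kth_antitone u).monovary (kth_antitone v)
  calc ∑ i, u i * v i = ∑ k : Fin n, kth u k * kth v ((σ.trans τ.symm) k) := by
        rw [← Equiv.sum_comp σ]
        refine sum_congr rfl fun k _ => ?_
        simp [kth_coe, σ, τ]
    _ ≤ ∑ k : Fin n, kth u k * kth v k := hmono.sum_mul_comp_perm_le_sum_mul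
    _ = ∑ k ∈ range n, kth u k * kth v k :=
        Fin.sum_univ_eq_sum_range (fun k => kth u k * kth v k) n

theorem absKth_nonneg (v : Fin n → ℝ) (k : ℕ) : 0 ≤ absKth v k := by
  unfold absKth kth
  split
  · exact abs_nonneg _
  · exact le_rfl

theorem absKth_antitone (v : Fin n → ℝ) : Antitone (absKth v) := by
  intro k l hkl
  by_cases hl : l < n
  · exact kth_antitone (fun i => |v i|) (show (⟨k, hkl.trans_lt hl⟩ : Fin n) ≤ ⟨l, hl⟩ from hkl)
  · simpa [absKth, kth, hl] using absKth_nonneg v k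

end Sorting

/-- Abel's inequality. -/
theorem sum_mul_le_sum_mul_of_sum_range_le {m : ℕ} {a b c : ℕ → ℝ}
    (hb : AntitoneOn b (Set.Iio m)) (hbm : 0 ≤ b (m - 1))
    (hac : ∀ q < m, ∑ k ∈ range (q + 1), a k ≤ ∑ k ∈ range (q + 1), c k) :
    ∑ k ∈ range m, a k * b k ≤ ∑ k ∈ range m, c k * b k := by
  set D : ℕ → ℝ := fun q => ∑ k ∈ range q, (c k - a k)
  have hD : ∀ q ≤ m, 0 ≤ D q := by
    rintro (_ | q) hq
    · simp [D]
    · simpa [D, sum_sub_distrib] using hac q hq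
  have hparts := sum_range_by_parts b (fun k => c k - a k) m
  simp only [smul_eq_mul] at hparts
  rw [← sub_nonneg, ← sum_sub_distrib]
  calc (0 : ℝ) ≤ b (m - 1) * D m - ∑ k ∈ range (m - 1), (b (k + 1) - b k) * D (k + 1) := by
        refine sub_nonneg.2 ((sum_nonpos fun k hk => ?_).trans (mul_nonneg hbm (hD m le_rfl)))
        have hk : k + 1 < m := by rw [mem_range] at hk; omega
        exact mul_nonpos_of_nonpos_of_nonneg
          (sub_nonpos.2 (hb (Set.mem_Iio.2 (by omega)) (Set.mem_Iio.2 hk) k.le_succ)) (hD _ hk.le)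
    _ = ∑ k ∈ range m, (c k * b k - a k * b k) := by
        rw [← hparts]
        exact sum_congr rfl fun k _ => by ring

section Slope

variable {n : ℕ} {w : ℕ → ℝ}

theorem sum_mul_le_dualNorm {J : (Fin n → ℝ) → ℝ} {g z : Fin n → ℝ}
    (hbdd : BddAbove {t : ℝ | ∃ x : Fin n → ℝ, J x ≤ 1 ∧ t = ∑ i, g i * x i}) (hz : J z ≤ 1) :
    ∑ i, g i * z i ≤ dualNorm J g :=
  le_csSup hbdd ⟨z, hz, rfl⟩

theorem dualNorm_le {J : (Fin n → ℝ) → ℝ} {g : Fin n → ℝ} {c : ℝ} (hc : 0 ≤ c)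
    (h : ∀ z, J z ≤ 1 → ∑ i, g i * z i ≤ c) : dualNorm J g ≤ c :=
  Real.sSup_le (by rintro t ⟨z, hz, rfl⟩; exact h z hz) hc

theorem slopeNorm_eq_sum_fin (w : ℕ → ℝ) (x : Fin n → ℝ) :
    slopeNorm w x = ∑ k : Fin n, w k * absKth x k :=
  (Fin.sum_univ_eq_sum_range (fun k => w k * absKth x k) n).symm

theorem mul_abs_le_slopeNorm (hw : ∀ k < n, 0 ≤ w k) (x : Fin n → ℝ) (i : Fin n) :
    w 0 * |x i| ≤ slopeNorm w x :=
  calc w 0 * |x i| ≤ w 0 * absKth x 0 :=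
        mul_le_mul_of_nonneg_left (le_kth_zero (fun j => |x j|) i) (hw 0 i.pos)
    _ ≤ slopeNorm w x :=
        single_le_sum (f := fun k => w k * absKth x k)
          (fun k hk => mul_nonneg (hw k (mem_range.1 hk)) (absKth_nonneg x k))
          (mem_range.2 i.pos)

theorem bddAbove_slopeNorm_dual (hw0 : 0 < w 0) (hw : ∀ k < n, 0 ≤ w k) (g : Fin n → ℝ) :
    BddAbove {t : ℝ | ∃ x : Fin n → ℝ, slopeNorm w x ≤ 1 ∧ t = ∑ i, g i * x i} := by
  refine ⟨∑ i, |g i| / w 0, ?_⟩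
  rintro t ⟨x, hx, rfl⟩
  refine sum_le_sum fun i _ => ?_
  have hxi : |x i| ≤ 1 / w 0 := by
    rw [le_div_iff₀' hw0]
    exact (mul_abs_le_slopeNorm hw x i).trans hx
  calc g i * x i ≤ |g i| * |x i| := (le_abs_self _).trans_eq (abs_mul _ _)
    _ ≤ |g i| * (1 / w 0) := mul_le_mul_of_nonneg_left hxi (abs_nonneg _)
    _ = |g i| / w 0 := by ring

theorem sum_mul_le_slopeNorm {g : Fin n → ℝ}
    (hg : ∀ q < n, ∑ k ∈ range (q + 1), absKth g k ≤ ∑ k ∈ range (q + 1), w k)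
    (x : Fin n → ℝ) : ∑ i, g i * x i ≤ slopeNorm w x :=
  calc ∑ i, g i * x i ≤ ∑ i, |g i| * |x i| :=
        sum_le_sum fun _ _ => (le_abs_self _).trans_eq (abs_mul _ _)
    _ ≤ ∑ k ∈ range n, absKth g k * absKth x k := sum_mul_le_sum_kth_mul_kth _ _
    _ ≤ ∑ k ∈ range n, w k * absKth x k :=
        sum_mul_le_sum_mul_of_sum_range_le ((absKth_antitone x).antitoneOn _)
          (absKth_nonneg x _) hg

theorem sum_fin_ite_le_eq_sum_range {q : ℕ} (hq : q < n) (f : ℕ → ℝ) :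
    ∑ k : Fin n, (if (k : ℕ) ≤ q then f k else 0) = ∑ k ∈ range (q + 1), f k := by
  rw [Fin.sum_univ_eq_sum_range (fun k => if k ≤ q then f k else 0), ← sum_filter]
  congr 1
  ext k
  simp only [mem_filter, mem_range]
  omega

/-- `c` times the signs of `g` on its `q + 1` largest entries in absolute value, and `0`
elsewhere (a zero entry gets sign `+`). -/
noncomputable def topSigns (g : Fin n → ℝ) (q : ℕ) (c : ℝ) : Fin n → ℝ := fun i =>
  if ((Tuple.sort fun j => -|g j|).symm i : ℕ) ≤ q then (if 0 ≤ g i then c else -c) else 0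

theorem mul_topSigns (g : Fin n → ℝ) (q : ℕ) (c : ℝ) (i : Fin n) :
    g i * topSigns g q c i =
      if ((Tuple.sort fun j => -|g j|).symm i : ℕ) ≤ q then c * |g i| else 0 := by
  unfold topSigns
  split_ifs with _ hg
  · rw [abs_of_nonneg hg]; ring
  · rw [abs_of_neg (not_le.1 hg)]; ring
  · ring

theorem abs_topSigns_sort (g : Fin n → ℝ) (q : ℕ) {c : ℝ} (hc : 0 ≤ c) (k : Fin n) :
    |topSigns g q c (Tuple.sort (fun j => -|g j|) k)| = if (k : ℕ) ≤ q then c else 0 := by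
  simp only [topSigns, Equiv.symm_apply_apply]
  split_ifs <;> simp [abs_of_nonneg hc]

theorem absKth_topSigns (g : Fin n → ℝ) (q : ℕ) {c : ℝ} (hc : 0 ≤ c) (k : Fin n) :
    absKth (topSigns g q c) k = if (k : ℕ) ≤ q then c else 0 := by
  have hanti : Antitone fun k : Fin n => |topSigns g q c (Tuple.sort (fun j => -|g j|) k)| := by
    intro k l hkl
    simp only [abs_topSigns_sort g q hc]
    split_ifs <;> first | exact le_rfl | exact hc | omega
  rw [absKth, kth_eq_of_antitone _ _ hanti, abs_topSigns_sort g q hc]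

theorem slopeNorm_topSigns (w : ℕ → ℝ) (g : Fin n → ℝ) {q : ℕ} (hq : q < n) {c : ℝ}
    (hc : 0 ≤ c) : slopeNorm w (topSigns g q c) = c * ∑ k ∈ range (q + 1), w k := by
  rw [slopeNorm_eq_sum_fin, mul_sum, ← sum_fin_ite_le_eq_sum_range hq]
  refine sum_congr rfl fun k _ => ?_
  rw [absKth_topSigns g q hc]
  split_ifs <;> ring

theorem sum_mul_topSigns (g : Fin n → ℝ) {q : ℕ} (hq : q < n) (c : ℝ) :
    ∑ i, g i * topSigns g q c i = c * ∑ k ∈ range (q + 1), absKth g k := by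
  rw [← Equiv.sum_comp (Tuple.sort fun j => -|g j|), mul_sum,
    ← sum_fin_ite_le_eq_sum_range hq]
  refine sum_congr rfl fun k _ => ?_
  rw [mul_topSigns, Equiv.symm_apply_apply, absKth, kth_coe]

theorem sum_range_absKth_le_of_dualNorm_le_one (hw0 : 0 < w 0) (hw : ∀ k < n, 0 ≤ w k)
    {g : Fin n → ℝ} (hg : dualNorm (slopeNorm w) g ≤ 1) {q : ℕ} (hq : q < n) :
    ∑ k ∈ range (q + 1), absKth g k ≤ ∑ k ∈ range (q + 1), w k := by
  set S := ∑ k ∈ range (q + 1), w k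
  have hS : 0 < S := hw0.trans_le <| single_le_sum
    (fun k hk => hw k (by rw [mem_range] at hk; omega)) (mem_range.2 q.succ_pos)
  have hnorm : slopeNorm w (topSigns g q S⁻¹) ≤ 1 := by
    rw [slopeNorm_topSigns w g hq (inv_nonneg.2 hS.le), inv_mul_cancel₀ hS.ne']
  have h := (sum_mul_le_dualNorm (bddAbove_slopeNorm_dual hw0 hw g) hnorm).trans hg
  rwa [sum_mul_topSigns g hq, inv_mul_le_iff₀ hS, mul_one] at h

theorem dualNorm_slopeNorm_le_one_iff (hw0 : 0 < w 0) (hw : ∀ k < n, 0 ≤ w k)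
    (g : Fin n → ℝ) : dualNorm (slopeNorm w) g ≤ 1 ↔
      ∀ q < n, ∑ k ∈ range (q + 1), absKth g k ≤ ∑ k ∈ range (q + 1), w k :=
  ⟨fun hg _ hq => sum_range_absKth_le_of_dualNorm_le_one hw0 hw hg hq,
    fun hg => dualNorm_le zero_le_one fun z hz => (sum_mul_le_slopeNorm hg z).trans hz⟩

end Slope

theorem slope_subdifferential_eq_general {n : ℕ} (w : ℕ → ℝ)
    (hw0 : 0 < w 0) (hwa : ∀ i j : ℕ, i ≤ j → j < n → w j ≤ w i)
    (hwn : 0 ≤ w (n - 1)) (x : Fin n → ℝ) :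
    {g : Fin n → ℝ | ∑ i, g i * x i = slopeNorm w x ∧ dualNorm (slopeNorm w) g ≤ 1} =
    {g : Fin n → ℝ | ∑ i, g i * x i = slopeNorm w x ∧
      ∀ q < n, ∑ k ∈ Finset.range (q + 1), absKth g k ≤ ∑ k ∈ Finset.range (q + 1), w k} := by
  have hw : ∀ k < n, 0 ≤ w k := fun k hk => hwn.trans (hwa k (n - 1) (by omega) (by omega))
  ext g
  simp only [Set.mem_ofPred_eq, dualNorm_slopeNorm_le_one_iff hw0 hw]

theorem slope_subdifferential_eq {n : ℕ} (hn : 0 < n) (w : ℕ → ℝ)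
    (hw0 : 0 < w 0) (hwa : ∀ i j : ℕ, i ≤ j → j < n → w j ≤ w i)
    (hwn : 0 ≤ w (n - 1)) (x : Fin n → ℝ) :
    {g : Fin n → ℝ | ∑ i, g i * x i = slopeNorm w x ∧ dualNorm (slopeNorm w) g ≤ 1} =
    {g : Fin n → ℝ | ∑ i, g i * x i = slopeNorm w x ∧
      ∀ q < n, ∑ k ∈ Finset.range (q + 1), absKth g k ≤ ∑ k ∈ Finset.range (q + 1), w k} :=
  slope_subdifferential_eq_general w hw0 hwa hwn x
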